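/- Subadditivity over a cover: if f_1,...,f_r : X → Y are fibrewise maps over B and {U_0,...,U_k} is an open cover of X, then D_B(f_1,...,f_r) ≤ Σ_{i=0}^k D_B(f_1|_{U_i},...,f_r|_{U_i}) + k. -/

import Mathlib

open Set

/-- Two continuous maps are fibrewise homotopic over `B`: there is a homotopy
whose every time-slice commutes with the projections to `B`. -/
def FibHomotopic {B X Y : Type*} [TopologicalSpace B] [TopologicalSpace X] [TopologicalSpace Y]
    (pX : X → B) (pY : Y → B) (f g : C(X, Y)) : Prop :=
  ∃ H : f.Homotopy g, ∀ (x : X) (t : unitInterval), pY (H (t, x)) = pX x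

/-- Sequential parametrized homotopic distance of a family of fibrewise maps:
the least `n` such that `X` admits an open cover by `n + 1` open sets on each of
which all the maps are pairwise fibrewise homotopic (`∞` if none exists). -/
noncomputable def fibDist {B X Y ι : Type*} [TopologicalSpace B] [TopologicalSpace X]
    [TopologicalSpace Y] (pX : X → B) (pY : Y → B) (f : ι → C(X, Y)) : ℕ∞ :=
  sInf {n : ℕ∞ | ∃ k : ℕ, (k : ℕ∞) = n ∧ ∃ U : Fin (k + 1) → Set X,
    (∀ i, IsOpen (U i)) ∧ (⋃ i, U i) = Set.univ ∧
    ∀ i s t, FibHomotopic (fun x : U i => pX (x : X)) pY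
      ((f s).restrict (U i)) ((f t).restrict (U i))}

/-!
Choose optimal covers `V i` of the pieces `U i`; their members, viewed as open subsets of `X`,
together form one cover of `X` with `∑ i, (D_B(f|_{U i}) + 1)` members.
-/

section

variable {B X Y Z ι κ : Type*} [TopologicalSpace B] [TopologicalSpace X] [TopologicalSpace Y]
  [TopologicalSpace Z]

lemma FibHomotopic.comp_right {pX : X → B} {pY : Y → B} {f g : C(X, Y)}
    (h : FibHomotopic pX pY f g) (φ : C(Z, X)) :
    FibHomotopic (pX ∘ φ) pY (f.comp φ) (g.comp φ) := by
  obtain ⟨H, hH⟩ := h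
  exact ⟨H.compContinuousMap φ, fun z t => hH (φ z) t⟩

lemma FibHomotopic.of_restrict_restrict {pX : X → B} {pY : Y → B} {f g : C(X, Y)}
    {U : Set X} {V : Set U}
    (h : FibHomotopic (fun x : V => pX (x : U)) pY ((f.restrict U).restrict V)
      ((g.restrict U).restrict V)) :
    FibHomotopic (fun x : Subtype.val '' V => pX x) pY
      (f.restrict (Subtype.val '' V)) (g.restrict (Subtype.val '' V)) := by
  have hmem : ∀ x : Subtype.val '' V, ∃ hU : (x : X) ∈ U, (⟨x, hU⟩ : U) ∈ V := by
    rintro ⟨_, y, hy, rfl⟩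
    exact ⟨y.2, hy⟩
  choose hU hV using hmem
  exact h.comp_right ⟨fun x => ⟨⟨x.1, hU x⟩, hV x⟩, by fun_prop⟩

def IsFibCover (pX : X → B) (pY : Y → B) (f : ι → C(X, Y)) (W : κ → Set X) : Prop :=
  (∀ j, IsOpen (W j)) ∧ (⋃ j, W j) = univ ∧
    ∀ j s t, FibHomotopic (fun x : W j => pX x) pY ((f s).restrict (W j)) ((f t).restrict (W j))

lemma IsFibCover.comp_equiv {κ' : Type*} {pX : X → B} {pY : Y → B} {f : ι → C(X, Y)}
    {W : κ → Set X} (hW : IsFibCover pX pY f W) (e : κ' ≃ κ) : IsFibCover pX pY f (W ∘ e) :=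
  ⟨fun j => hW.1 (e j), (e.surjective.iUnion_comp W).trans hW.2.1, fun j => hW.2.2 (e j)⟩

lemma IsFibCover.sigma {σ : Type*} {κ : σ → Type*} {pX : X → B} {pY : Y → B}
    {f : ι → C(X, Y)} {U : σ → Set X} (hUo : ∀ i, IsOpen (U i)) (hUc : (⋃ i, U i) = univ)
    {V : ∀ i, κ i → Set (U i)}
    (hV : ∀ i, IsFibCover (fun x : U i => pX x) pY (fun s => (f s).restrict (U i)) (V i)) :
    IsFibCover pX pY f (fun p : Σ i, κ i => Subtype.val '' V p.1 p.2) := by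
  refine ⟨fun p => (hUo p.1).isOpenMap_subtype_val _ ((hV p.1).1 p.2), ?_,
    fun p s t => ((hV p.1).2.2 p.2 s t).of_restrict_restrict⟩
  refine eq_univ_of_forall fun x => ?_
  obtain ⟨i, hi⟩ := mem_iUnion.mp (hUc ▸ mem_univ x)
  obtain ⟨j, hj⟩ := mem_iUnion.mp ((hV i).2.1 ▸ mem_univ (⟨x, hi⟩ : U i))
  exact mem_iUnion.mpr ⟨⟨i, j⟩, ⟨x, hi⟩, hj, rfl⟩

lemma fibDist_le_of_isFibCover [Fintype κ] {pX : X → B} {pY : Y → B} {f : ι → C(X, Y)}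
    {W : κ → Set X} (hW : IsFibCover pX pY f W) {m : ℕ} (hκ : Fintype.card κ = m + 1) :
    fibDist pX pY f ≤ m :=
  sInf_le ⟨m, rfl, _, hW.comp_equiv (Fintype.equivFinOfCardEq hκ).symm⟩

lemma exists_isFibCover_of_fibDist_ne_top {pX : X → B} {pY : Y → B} {f : ι → C(X, Y)}
    (h : fibDist pX pY f ≠ ⊤) :
    ∃ n : ℕ, (n : ℕ∞) = fibDist pX pY f ∧ ∃ V : Fin (n + 1) → Set X, IsFibCover pX pY f V := by
  have hne : {n : ℕ∞ | ∃ k : ℕ, (k : ℕ∞) = n ∧ ∃ V : Fin (k + 1) → Set X,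
      IsFibCover pX pY f V}.Nonempty :=
    nonempty_iff_ne_empty.mpr fun he => h ((congrArg sInf he).trans sInf_empty)
  exact csInf_mem hne

end

theorem stmt6 {B X Y : Type*} [TopologicalSpace B] [TopologicalSpace X] [TopologicalSpace Y]
    (pX : X → B) (pY : Y → B)
    (r : ℕ) (f : Fin r → C(X, Y))
    (k : ℕ) (U : Fin (k + 1) → Set X) (hUo : ∀ i, IsOpen (U i))
    (hUc : (⋃ i, U i) = Set.univ) :
    fibDist pX pY f ≤
      (∑ i : Fin (k + 1),
        fibDist (fun x : U i => pX (x : X)) pY (fun s => (f s).restrict (U i))) + k := by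
  by_cases htop : ∃ i, fibDist (fun x : U i => pX (x : X)) pY (fun s => (f s).restrict (U i)) = ⊤
  · obtain ⟨i, hi⟩ := htop
    have hsum : (∑ i : Fin (k + 1),
        fibDist (fun x : U i => pX (x : X)) pY (fun s => (f s).restrict (U i))) = ⊤ :=
      WithTop.sum_eq_top.mpr ⟨i, Finset.mem_univ i, hi⟩
    simp [hsum]
  push Not at htop
  choose n hn V hV using fun i => exists_isFibCover_of_fibDist_ne_top (htop i)
  have hcard : Fintype.card (Σ i, Fin (n i + 1)) = (∑ i, n i) + k + 1 := by
    simp only [Fintype.card_sigma, Fintype.card_fin, Finset.sum_add_distrib, Finset.sum_const,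
      Finset.card_univ, smul_eq_mul, mul_one]
    ring
  calc fibDist pX pY f ≤ ((∑ i, n i + k : ℕ) : ℕ∞) :=
        fibDist_le_of_isFibCover (IsFibCover.sigma hUo hUc hV) hcard
    _ = _ := by push_cast [hn]; rfl
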